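/- arXiv:1001.2226 — 2 statements merged into one kernel-verified Lean document; each statement's English description precedes it below -/
import Mathlib

section
/- Fix θ > 0 and let G(r) = γ(3/2, r²/(4θ)). The equation G(r) = r·G'(r) for r > 0 has exactly one positive solution. -/
open Real

/-- The lower incomplete gamma function `γ(s, x) = ∫₀^x t^(s-1) e^(-t) dt`. -/
noncomputable def lowerGamma (s x : ℝ) : ℝ := ∫ t in (0:ℝ)..x, t ^ (s - 1) * Real.exp (-t)

/-!
Substituting `x = r² / (4θ)` turns the equation into `γ(3/2, x) = 2 x^(3/2) e^(-x)`. For `s > 1/2`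
the difference `F(x) = γ(s, x) - 2 x^s e^(-x)` vanishes at `0` and has derivative
`x^(s-1) e^(-x) (2x + 1 - 2s)`, so it decreases on `[0, s - 1/2]` and increases afterwards, while
`F(x) → Γ(s) > 0` as `x → ∞`. Hence `F` has exactly one positive zero.
-/

open Set Filter Topology

lemma lowerGamma_zero_right (s : ℝ) : lowerGamma s 0 = 0 :=
  intervalIntegral.integral_same

section

variable {s : ℝ}

lemma intervalIntegrable_rpow_mul_exp_neg (hs : 0 < s) (a b : ℝ) :
    IntervalIntegrable (fun t : ℝ => t ^ (s - 1) * exp (-t)) MeasureTheory.volume a b :=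
  (intervalIntegral.intervalIntegrable_rpow' (by linarith)).mul_continuousOn
    (continuous_exp.comp continuous_neg).continuousOn

lemma continuous_lowerGamma (hs : 0 < s) : Continuous (lowerGamma s) :=
  intervalIntegral.continuous_primitive (intervalIntegrable_rpow_mul_exp_neg hs) 0

lemma hasDerivAt_lowerGamma (hs : 0 < s) {x : ℝ} (hx : 0 < x) :
    HasDerivAt (lowerGamma s) (x ^ (s - 1) * exp (-x)) x := by
  have hcont : ContinuousOn (fun t : ℝ => t ^ (s - 1) * exp (-t)) (Ioi 0) := fun t ht =>
    ((continuousAt_rpow_const t _ (Or.inl (ne_of_gt ht))).mul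
      (continuous_exp.comp continuous_neg).continuousAt).continuousWithinAt
  exact intervalIntegral.integral_hasDerivAt_right (intervalIntegrable_rpow_mul_exp_neg hs 0 x)
    (hcont.stronglyMeasurableAtFilter isOpen_Ioi x hx) (hcont.continuousAt (Ioi_mem_nhds hx))

lemma tendsto_lowerGamma_atTop (hs : 0 < s) : Tendsto (lowerGamma s) atTop (𝓝 (Gamma s)) := by
  rw [Gamma_eq_integral hs]
  simp_rw [mul_comm (exp _)]
  exact MeasureTheory.intervalIntegral_tendsto_integral_Ioi 0
    (by simpa only [mul_comm (exp _)] using GammaIntegral_convergent hs) tendsto_id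

lemma hasDerivAt_lowerGamma_sub_two_rpow_mul_exp (hs : 0 < s) {x : ℝ} (hx : 0 < x) :
    HasDerivAt (fun y => lowerGamma s y - 2 * y ^ s * exp (-y))
      (x ^ (s - 1) * exp (-x) * (2 * x + 1 - 2 * s)) x := by
  have hpow : HasDerivAt (fun y : ℝ => y ^ s) (s * x ^ (s - 1)) x :=
    hasDerivAt_rpow_const (Or.inl hx.ne')
  have hexp : HasDerivAt (fun y : ℝ => exp (-y)) (-exp (-x)) x := by
    simpa using (hasDerivAt_neg x).exp
  refine ((hasDerivAt_lowerGamma hs hx).sub ((hpow.const_mul 2).mul hexp)).congr_deriv ?_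
  rw [rpow_sub_one hx.ne']
  field_simp
  ring

lemma continuous_lowerGamma_sub_two_rpow_mul_exp (hs : 0 < s) :
    Continuous (fun y => lowerGamma s y - 2 * y ^ s * exp (-y)) :=
  (continuous_lowerGamma hs).sub <| (continuous_const.mul
    (continuous_rpow_const hs.le)).mul (continuous_exp.comp continuous_neg)

lemma tendsto_lowerGamma_sub_two_rpow_mul_exp (hs : 0 < s) :
    Tendsto (fun y => lowerGamma s y - 2 * y ^ s * exp (-y)) atTop (𝓝 (Gamma s)) := by
  have h := (tendsto_rpow_mul_exp_neg_mul_atTop_nhds_zero s 1 one_pos).const_mul 2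
  simp only [neg_one_mul, mul_zero, ← mul_assoc] at h
  simpa using (tendsto_lowerGamma_atTop hs).sub h

end

lemma existsUnique_pos_zero_of_strictAntiOn_of_strictMonoOn {F : ℝ → ℝ} {a : ℝ} (ha : 0 < a)
    (hF : ContinuousOn F (Ici a)) (hF0 : F 0 = 0) (hanti : StrictAntiOn F (Icc 0 a))
    (hmono : StrictMonoOn F (Ici a)) (htop : ∀ᶠ x in atTop, 0 < F x) :
    ∃! x, 0 < x ∧ F x = 0 := by
  have hneg : ∀ y ∈ Ioc 0 a, F y < 0 := fun y hy =>
    hF0 ▸ hanti ⟨le_rfl, ha.le⟩ ⟨hy.1.le, hy.2⟩ hy.1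
  obtain ⟨b, hb, hab⟩ := (htop.and (eventually_ge_atTop a)).exists
  obtain ⟨x, hx, hFx⟩ := intermediate_value_Ioo hab (hF.mono Icc_subset_Ici_self)
    ⟨hneg a ⟨ha, le_rfl⟩, hb⟩
  refine ⟨x, ⟨ha.trans hx.1, hFx⟩, fun y ⟨hy, hFy⟩ => ?_⟩
  have hay : a < y := not_le.1 fun hya => (hneg y ⟨hy, hya⟩).ne hFy
  exact hmono.injOn hay.le hx.1.le (hFy.trans hFx.symm)

theorem existsUnique_pos_lowerGamma_eq_two_rpow_mul_exp {s : ℝ} (hs : 1 / 2 < s) :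
    ∃! x : ℝ, 0 < x ∧ lowerGamma s x = 2 * x ^ s * exp (-x) := by
  have hs0 : 0 < s := by linarith
  set F : ℝ → ℝ := fun y => lowerGamma s y - 2 * y ^ s * exp (-y)
  have hcont := continuous_lowerGamma_sub_two_rpow_mul_exp hs0
  have hderiv {x : ℝ} (hx : 0 < x) := (hasDerivAt_lowerGamma_sub_two_rpow_mul_exp hs0 hx).deriv
  have hfactor {x : ℝ} (hx : 0 < x) : 0 < x ^ (s - 1) * exp (-x) := by positivity
  have hanti : StrictAntiOn F (Icc 0 (s - 1 / 2)) := by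
    refine strictAntiOn_of_deriv_neg (convex_Icc _ _) hcont.continuousOn fun x hx => ?_
    rw [interior_Icc] at hx
    rw [hderiv hx.1]
    exact mul_neg_of_pos_of_neg (hfactor hx.1) (by linarith [hx.2])
  have hmono : StrictMonoOn F (Ici (s - 1 / 2)) := by
    refine strictMonoOn_of_deriv_pos (convex_Ici _) hcont.continuousOn fun x hx => ?_
    rw [interior_Ici] at hx
    have hx0 : 0 < x := by linarith [mem_Ioi.1 hx]
    rw [hderiv hx0]
    exact mul_pos (hfactor hx0) (by linarith [mem_Ioi.1 hx])
  have htop := (tendsto_lowerGamma_sub_two_rpow_mul_exp hs0).eventually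
    (lt_mem_nhds (Gamma_pos_of_pos hs0))
  have hF0 : F 0 = 0 := by simp [F, lowerGamma_zero_right, zero_rpow hs0.ne']
  simpa only [sub_eq_zero] using existsUnique_pos_zero_of_strictAntiOn_of_strictMonoOn
    (by linarith) hcont.continuousOn hF0 hanti hmono htop

lemma Set.BijOn.existsUnique_mem_comp {α β : Type*} {s : Set α} {t : Set β} {f : α → β}
    (hf : BijOn f s t) {p : β → Prop} (h : ∃! y, y ∈ t ∧ p y) : ∃! x, x ∈ s ∧ p (f x) := by
  obtain ⟨y, ⟨hyt, hy⟩, huniq⟩ := h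
  obtain ⟨x, hxs, rfl⟩ := hf.surjOn hyt
  exact ⟨x, ⟨hxs, hy⟩, fun x' ⟨hx's, hx'⟩ => hf.injOn hx's hxs (huniq _ ⟨hf.mapsTo hx's, hx'⟩)⟩

lemma bijOn_sq_div {c : ℝ} (hc : 0 < c) : BijOn (fun r : ℝ => r ^ 2 / c) (Ioi 0) (Ioi 0) := by
  refine ⟨fun r hr => div_pos (pow_pos hr 2) hc, StrictMonoOn.injOn fun a ha b _ hab =>
    div_lt_div_of_pos_right (pow_lt_pow_left₀ hab (le_of_lt ha) two_ne_zero) hc, fun y hy => ?_⟩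
  refine ⟨√(c * y), sqrt_pos.2 (mul_pos hc hy), ?_⟩
  simp only [sq_sqrt (mul_pos hc hy).le]
  field_simp

lemma sq_rpow_three_halves {u : ℝ} (hu : 0 ≤ u) : (u ^ 2) ^ ((3 : ℝ) / 2) = u ^ 3 := by
  rw [← rpow_natCast, ← rpow_mul hu]
  norm_num

lemma mul_sq_mul_exp_div_eq {θ r : ℝ} (hθ : 0 < θ) (hr : 0 ≤ r) :
    r * (r ^ 2 * exp (-r ^ 2 / (4 * θ)) / (4 * θ ^ ((3 : ℝ) / 2))) =
      2 * (r ^ 2 / (4 * θ)) ^ ((3 : ℝ) / 2) * exp (-(r ^ 2 / (4 * θ))) := by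
  have hsqrt : 0 < √θ := sqrt_pos.2 hθ
  have hx : r ^ 2 / (4 * θ) = (r / (2 * √θ)) ^ 2 := by
    rw [div_pow, mul_pow, sq_sqrt hθ.le]
    ring
  have hθ32 : θ ^ ((3 : ℝ) / 2) = √θ ^ 3 := by
    rw [← sq_rpow_three_halves hsqrt.le, sq_sqrt hθ.le]
  rw [neg_div, hx, hθ32, sq_rpow_three_halves (by positivity)]
  field_simp
  ring

/-- The equation `G(r) = r G'(r)`, with `G'(r) = r² e^{-r²/(4θ)}/(4θ^{3/2})`, has exactly one
positive solution. -/
theorem stmt_3 (θ : ℝ) (hθ : 0 < θ) :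
    ∃! r : ℝ, 0 < r ∧
      lowerGamma (3/2) (r ^ 2 / (4 * θ)) =
        r * (r ^ 2 * Real.exp (-r ^ 2 / (4 * θ)) / (4 * θ ^ ((3:ℝ)/2))) := by
  have h := (bijOn_sq_div (mul_pos four_pos hθ)).existsUnique_mem_comp
    (existsUnique_pos_lowerGamma_eq_two_rpow_mul_exp (s := 3 / 2) (by norm_num))
  refine (existsUnique_congr fun r => and_congr_right fun hr => ?_).1 h
  rw [mul_sq_mul_exp_div_eq hθ (le_of_lt hr)]
end

section
/- Let g₀₀ : (0,∞) → ℝ be continuous with g₀₀(r) → 1 as r → 0⁺ and r → ∞. If min g₀₀ < 0 then g₀₀ has at least two zeros on (0,∞); if g₀₀ > 0 everywhere then it has no zeros; and there exists g₀₀ (of the noncommutative form) attaining minimum exactly 0 with a unique zero. -/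
/-!
Part (1) is the intermediate value theorem applied on each side of a point where `g` is
negative, since `g` is positive near `0⁺` and near `∞`.

For the extremal example take `θ = 1/4`, so that `g₀₀(r) = 1 - (4M/√π) F(r²)` with
`F(u) = γ(3/2, u)/√u`. Then `F'(u) = -φ(u)/(2u√u)` where `φ(u) = γ(3/2, u) - 2u√u e^{-u}`.
Since `φ' = 2√u e^{-u}(u - 1)`, `φ(0) = 0` and `φ(1) < 0 < φ(4)`, the function `φ` changes sign
exactly once, at some `u₀ > 1`; hence `F` has a strict global maximum at `u₀`, and
`M = √π/(4F(u₀))` makes `√u₀` the unique zero of `g₀₀`, which is nonnegative.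
-/

open Real Filter Topology Set

/-- The time-time metric coefficient of the noncommutative-geometry-inspired Schwarzschild
solution. -/
noncomputable def g00 (θ M r : ℝ) : ℝ :=
  1 - 4 * M / (Real.sqrt π * r) * lowerGamma (3/2) (r ^ 2 / (4 * θ))

theorem exists_mem_Ioo_eq_zero_of_eventually_pos_nhdsGT {g : ℝ → ℝ} {a r : ℝ}
    (hcont : ContinuousOn g (Ioi a)) (hnear : ∀ᶠ x in 𝓝[>] a, 0 < g x) (hr : a < r)
    (hgr : g r < 0) : ∃ x ∈ Ioo a r, g x = 0 := by
  obtain ⟨b, hgb, hb⟩ := (hnear.and (Ioo_mem_nhdsGT hr)).exists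
  obtain ⟨x, hx, hgx⟩ := intermediate_value_Ioo' hb.2.le
    (hcont.mono fun y hy => hb.1.trans_le hy.1) ⟨hgr, hgb⟩
  exact ⟨x, ⟨hb.1.trans hx.1, hx.2⟩, hgx⟩

theorem exists_gt_eq_zero_of_eventually_pos_atTop {g : ℝ → ℝ} {a r : ℝ}
    (hcont : ContinuousOn g (Ioi a)) (hfar : ∀ᶠ x in atTop, 0 < g x) (hr : a < r)
    (hgr : g r < 0) : ∃ x, r < x ∧ g x = 0 := by
  obtain ⟨b, hgb, hb⟩ := (hfar.and (eventually_gt_atTop r)).exists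
  obtain ⟨x, hx, hgx⟩ := intermediate_value_Ioo hb.le
    (hcont.mono fun y hy => hr.trans_le hy.1) ⟨hgr, hgb⟩
  exact ⟨x, hx.1, hgx⟩

theorem lt_of_hasDerivAt_pos_of_neg {f f' : ℝ → ℝ} {a c : ℝ}
    (hf : ∀ y, a < y → HasDerivAt f (f' y) y) (hinc : ∀ y ∈ Ioo a c, 0 < f' y)
    (hdec : ∀ y, c < y → f' y < 0) (hc : a < c) {x : ℝ} (hx : a < x) (hxc : x ≠ c) :
    f x < f c := by
  have hcont : ContinuousOn f (Ioi a) := fun y hy => (hf y hy).continuousAt.continuousWithinAt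
  rcases hxc.lt_or_gt with hlt | hgt
  · refine strictMonoOn_of_deriv_pos (convex_Ioc a c) (hcont.mono Ioc_subset_Ioi_self)
      (fun y hy => ?_) ⟨hx, hlt.le⟩ ⟨hc, le_rfl⟩ hlt
    rw [interior_Ioc] at hy
    exact (hf y hy.1).deriv ▸ hinc y hy
  · refine strictAntiOn_of_deriv_neg (convex_Ici c) (hcont.mono fun y hy => hc.trans_le hy)
      (fun y hy => ?_) (le_refl c) hgt.le hgt
    rw [interior_Ici] at hy
    exact (hf y (hc.trans hy)).deriv ▸ hdec y hy

theorem integral_exp_neg (a b : ℝ) : ∫ t in a..b, exp (-t) = exp (-a) - exp (-b) := by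
  rw [intervalIntegral.integral_comp_neg fun t => exp t, integral_exp]

theorem continuous_sqrt_mul_exp_neg : Continuous fun t : ℝ => √t * exp (-t) := by
  fun_prop

theorem lowerGamma_three_halves (x : ℝ) :
    lowerGamma (3/2) x = ∫ t in (0:ℝ)..x, √t * exp (-t) := by
  unfold lowerGamma
  norm_num [← Real.sqrt_eq_rpow]

theorem hasDerivAt_lowerGamma_three_halves (x : ℝ) :
    HasDerivAt (lowerGamma (3/2)) (√x * exp (-x)) x := by
  rw [funext lowerGamma_three_halves]
  exact intervalIntegral.integral_hasDerivAt_right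
    (continuous_sqrt_mul_exp_neg.intervalIntegrable _ _)
    continuous_sqrt_mul_exp_neg.stronglyMeasurable.stronglyMeasurableAtFilter
    continuous_sqrt_mul_exp_neg.continuousAt

theorem continuous_lowerGamma_three_halves : Continuous (lowerGamma (3/2)) :=
  continuous_iff_continuousAt.mpr fun x => (hasDerivAt_lowerGamma_three_halves x).continuousAt

theorem lowerGamma_three_halves_pos {x : ℝ} (hx : 0 < x) : 0 < lowerGamma (3/2) x := by
  rw [lowerGamma_three_halves]
  exact intervalIntegral.intervalIntegral_pos_of_pos_on
    (continuous_sqrt_mul_exp_neg.intervalIntegrable _ _)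
    (fun t ht => mul_pos (Real.sqrt_pos.mpr ht.1) (exp_pos _)) hx

theorem lowerGamma_three_halves_one_le : lowerGamma (3/2) 1 ≤ 1 - exp (-1) := by
  rw [lowerGamma_three_halves, show 1 - exp (-1) = exp (-0) - exp (-1) by simp,
    ← integral_exp_neg]
  refine intervalIntegral.integral_mono_on zero_le_one
    (continuous_sqrt_mul_exp_neg.intervalIntegrable _ _)
    ((continuous_exp.comp continuous_neg).intervalIntegrable _ _) fun t ht => ?_
  exact mul_le_of_le_one_left (exp_pos _).le (Real.sqrt_le_one.mpr ht.2)

theorem le_lowerGamma_three_halves_four : exp (-1) - exp (-4) ≤ lowerGamma (3/2) 4 := by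
  have hnonneg : ∀ t, 0 ≤ √t * exp (-t) := fun t => mul_nonneg (Real.sqrt_nonneg _) (exp_pos _).le
  calc exp (-1) - exp (-4) = ∫ t in (1:ℝ)..4, exp (-t) := (integral_exp_neg 1 4).symm
    _ ≤ ∫ t in (1:ℝ)..4, √t * exp (-t) := by
      refine intervalIntegral.integral_mono_on (by norm_num)
        ((continuous_exp.comp continuous_neg).intervalIntegrable _ _)
        (continuous_sqrt_mul_exp_neg.intervalIntegrable _ _) fun t ht => ?_
      exact le_mul_of_one_le_left (exp_pos _).le (Real.one_le_sqrt.mpr ht.1)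
    _ ≤ ∫ t in (0:ℝ)..4, √t * exp (-t) :=
      intervalIntegral.integral_mono_interval (by norm_num) (by norm_num) le_rfl
        (Eventually.of_forall hnonneg) (continuous_sqrt_mul_exp_neg.intervalIntegrable _ _)
    _ = lowerGamma (3/2) 4 := (lowerGamma_three_halves 4).symm

noncomputable def gammaRatioDerivNumer (u : ℝ) : ℝ :=
  lowerGamma (3/2) u - 2 * u * √u * exp (-u)

theorem continuous_gammaRatioDerivNumer : Continuous gammaRatioDerivNumer :=
  continuous_lowerGamma_three_halves.sub (by fun_prop)

theorem hasDerivAt_gammaRatioDerivNumer {u : ℝ} (hu : 0 < u) :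
    HasDerivAt gammaRatioDerivNumer (2 * √u * exp (-u) * (u - 1)) u := by
  have hsqrt := Real.hasDerivAt_sqrt hu.ne'
  have hexp : HasDerivAt (fun v => exp (-v)) (-exp (-u)) u := by
    simpa using (hasDerivAt_neg u).exp
  refine ((hasDerivAt_lowerGamma_three_halves u).sub
    ((((hasDerivAt_id' u).const_mul 2).mul hsqrt).mul hexp)).congr_deriv ?_
  have hs : √u ≠ 0 := (Real.sqrt_pos.mpr hu).ne'
  simp only [Pi.mul_apply]
  field_simp
  rw [Real.sq_sqrt hu.le]
  ring

theorem gammaRatioDerivNumer_zero : gammaRatioDerivNumer 0 = 0 := by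
  simp [gammaRatioDerivNumer, lowerGamma]

theorem gammaRatioDerivNumer_one_neg : gammaRatioDerivNumer 1 < 0 := by
  have hγ := lowerGamma_three_halves_one_le
  have he : exp 1 * exp (-1) = 1 := by rw [← exp_add]; simp
  have he3 : exp 1 < 3 := by linarith [exp_one_lt_d9]
  have : 0 < exp (-1) := exp_pos _
  rw [gammaRatioDerivNumer, Real.sqrt_one]
  nlinarith

theorem gammaRatioDerivNumer_four_pos : 0 < gammaRatioDerivNumer 4 := by
  have hγ := le_lowerGamma_three_halves_four
  have he : exp (-1) = exp 1 ^ 3 * exp (-4) := by rw [← exp_nat_mul, ← exp_add]; norm_num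
  have he3 : 17 < exp 1 ^ 3 := by
    have := pow_lt_pow_left₀ exp_one_gt_d9 (by norm_num) three_ne_zero
    norm_num at this ⊢
    linarith
  have : 0 < exp (-4) := exp_pos _
  rw [gammaRatioDerivNumer, show (4:ℝ) = 2 ^ 2 by norm_num, Real.sqrt_sq zero_le_two]
  nlinarith

theorem strictAntiOn_gammaRatioDerivNumer : StrictAntiOn gammaRatioDerivNumer (Icc 0 1) := by
  refine strictAntiOn_of_deriv_neg (convex_Icc 0 1)
    continuous_gammaRatioDerivNumer.continuousOn fun u hu => ?_
  rw [interior_Icc] at hu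
  rw [(hasDerivAt_gammaRatioDerivNumer hu.1).deriv]
  have := Real.sqrt_pos.mpr hu.1
  exact mul_neg_of_pos_of_neg (by positivity) (sub_neg.mpr hu.2)

theorem strictMonoOn_gammaRatioDerivNumer : StrictMonoOn gammaRatioDerivNumer (Ici 1) := by
  refine strictMonoOn_of_deriv_pos (convex_Ici 1)
    continuous_gammaRatioDerivNumer.continuousOn fun u hu => ?_
  rw [interior_Ici] at hu
  have hu0 : 0 < u := one_pos.trans hu
  rw [(hasDerivAt_gammaRatioDerivNumer hu0).deriv]
  have := Real.sqrt_pos.mpr hu0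
  exact mul_pos (by positivity) (sub_pos.mpr hu)

theorem exists_gammaRatioDerivNumer_sign_change : ∃ u₀, 1 < u₀ ∧
    (∀ u ∈ Ioo 0 u₀, gammaRatioDerivNumer u < 0) ∧ ∀ u, u₀ < u → 0 < gammaRatioDerivNumer u := by
  obtain ⟨u₀, hu₀, hzero⟩ := intermediate_value_Ioo (by norm_num : (1:ℝ) ≤ 4)
    continuous_gammaRatioDerivNumer.continuousOn
    ⟨gammaRatioDerivNumer_one_neg, gammaRatioDerivNumer_four_pos⟩
  refine ⟨u₀, hu₀.1, fun u hu => ?_, fun u hu => ?_⟩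
  · rcases le_or_gt u 1 with hu1 | hu1
    · simpa [gammaRatioDerivNumer_zero] using strictAntiOn_gammaRatioDerivNumer
        (left_mem_Icc.mpr zero_le_one) ⟨hu.1.le, hu1⟩ hu.1
    · simpa [hzero] using strictMonoOn_gammaRatioDerivNumer hu1.le hu₀.1.le hu.2
  · simpa [hzero] using
      strictMonoOn_gammaRatioDerivNumer hu₀.1.le (hu₀.1.le.trans hu.le) hu

noncomputable def gammaRatio (u : ℝ) : ℝ := lowerGamma (3/2) u / √u

theorem hasDerivAt_gammaRatio {u : ℝ} (hu : 0 < u) :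
    HasDerivAt gammaRatio (-gammaRatioDerivNumer u / (2 * u * √u)) u := by
  refine ((hasDerivAt_lowerGamma_three_halves u).div (Real.hasDerivAt_sqrt hu.ne')
    (Real.sqrt_pos.mpr hu).ne').congr_deriv ?_
  have hs : √u ≠ 0 := (Real.sqrt_pos.mpr hu).ne'
  rw [gammaRatioDerivNumer]
  field_simp
  linear_combination lowerGamma (3/2) u * Real.sq_sqrt hu.le

theorem exists_forall_gammaRatio_lt : ∃ u₀, 0 < u₀ ∧
    ∀ u, 0 < u → u ≠ u₀ → gammaRatio u < gammaRatio u₀ := by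
  obtain ⟨u₀, hu₀, hneg, hpos⟩ := exists_gammaRatioDerivNumer_sign_change
  have hden : ∀ u, 0 < u → 0 < 2 * u * √u := fun u hu => by
    have := Real.sqrt_pos.mpr hu; positivity
  refine ⟨u₀, one_pos.trans hu₀, fun u hu hne => ?_⟩
  refine lt_of_hasDerivAt_pos_of_neg (fun v hv => hasDerivAt_gammaRatio hv)
    (fun v hv => div_pos (neg_pos.mpr (hneg v hv)) (hden v hv.1))
    (fun v hv => div_neg_of_neg_of_pos (neg_neg_iff_pos.mpr (hpos v hv))
      (hden v (by linarith)))
    (one_pos.trans hu₀) hu hne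

theorem g00_quarter (M : ℝ) {r : ℝ} (hr : 0 < r) :
    g00 (1/4) M r = 1 - 4 * M / √π * gammaRatio (r ^ 2) := by
  rw [g00, gammaRatio, Real.sqrt_sq hr.le]
  norm_num
  ring

theorem exists_g00_extremal : ∃ θ M : ℝ, 0 < θ ∧ 0 < M ∧
    (∀ r : ℝ, 0 < r → 0 ≤ g00 θ M r) ∧ ∃! r : ℝ, 0 < r ∧ g00 θ M r = 0 := by
  obtain ⟨u₀, hu₀, hmax⟩ := exists_forall_gammaRatio_lt
  have hc : 0 < gammaRatio u₀ :=
    div_pos (lowerGamma_three_halves_pos hu₀) (Real.sqrt_pos.mpr hu₀)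
  have hπ : 0 < √π := Real.sqrt_pos.mpr pi_pos
  have hg : ∀ r, 0 < r → g00 (1/4) (√π / (4 * gammaRatio u₀)) r =
      1 - gammaRatio (r ^ 2) / gammaRatio u₀ := fun r hr => by
    rw [g00_quarter _ hr]
    field_simp
  have hle : ∀ r, 0 < r → gammaRatio (r ^ 2) ≤ gammaRatio u₀ := fun r hr => by
    rcases eq_or_ne (r ^ 2) u₀ with h | h
    · rw [h]
    · exact (hmax _ (by positivity) h).le
  refine ⟨1/4, √π / (4 * gammaRatio u₀), by norm_num, by positivity, fun r hr => ?_,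
    ⟨√u₀, ⟨Real.sqrt_pos.mpr hu₀, ?_⟩, fun r ⟨hr, hzero⟩ => ?_⟩⟩
  · rw [hg r hr, sub_nonneg, div_le_one hc]
    exact hle r hr
  · rw [hg _ (Real.sqrt_pos.mpr hu₀), Real.sq_sqrt hu₀.le, div_self hc.ne', sub_self]
  · rw [hg r hr, sub_eq_zero, eq_comm, div_eq_one_iff_eq hc.ne'] at hzero
    have hsq : r ^ 2 = u₀ := by
      by_contra hne
      exact (hmax _ (by positivity) hne).ne hzero
    rw [← hsq, Real.sqrt_sq hr.le]

/-- A continuous `g₀₀` on `(0, ∞)` tending to `1` at `0⁺` and at `∞` has at least two zeros if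
it takes a negative value, no zeros if it is everywhere positive; and there is a `g₀₀` of the
noncommutative form with minimum exactly `0` and a unique zero. -/
theorem stmt_19 :
    (∀ g : ℝ → ℝ, ContinuousOn g (Ioi 0) →
      Tendsto g (𝓝[>] 0) (𝓝 1) → Tendsto g atTop (𝓝 1) →
      (∃ r : ℝ, 0 < r ∧ g r < 0) →
      ∃ a b : ℝ, 0 < a ∧ a < b ∧ g a = 0 ∧ g b = 0) ∧
    (∀ g : ℝ → ℝ, (∀ r : ℝ, 0 < r → 0 < g r) → ¬∃ r : ℝ, 0 < r ∧ g r = 0) ∧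
    (∃ θ M : ℝ, 0 < θ ∧ 0 < M ∧
      (∀ r : ℝ, 0 < r → 0 ≤ g00 θ M r) ∧
      (∃! r : ℝ, 0 < r ∧ g00 θ M r = 0)) := by
  refine ⟨fun g hcont hnear hfar ⟨r, hr, hgr⟩ => ?_,
    fun g hpos ⟨r, hr, hgr⟩ => (hpos r hr).ne' hgr, exists_g00_extremal⟩
  obtain ⟨a, ha, hga⟩ := exists_mem_Ioo_eq_zero_of_eventually_pos_nhdsGT hcont
    (hnear.eventually (eventually_gt_nhds one_pos)) hr hgr
  obtain ⟨b, hb, hgb⟩ := exists_gt_eq_zero_of_eventually_pos_atTop hcont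
    (hfar.eventually (eventually_gt_nhds one_pos)) hr hgr
  exact ⟨a, b, ha.1, ha.2.trans hb, hga, hgb⟩
end
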